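/- arXiv:2411.17031 — 5 statements merged into one kernel-verified Lean document; each statement's English description precedes it below -/
import Mathlib

section
/- Let g be a Lie superalgebra equipped with an action of sl₂ by even derivations, and suppose g decomposes as an sl₂-module as g = sl₂ ⊗ J ⊕ V ⊗ M ⊕ D, where V is the natural 2-dimensional sl₂-representation and J, M, D carry trivial sl₂-action (g is 'short'). Define on J the product 2 a·b := [a, f b] (identifying J with the h-eigenspace of eigenvalue 2 via a ↦ e⊗a, where e, f, h are the standard sl₂-generators acting on g). Then (J, ·) is a Jordan superalgebra. -/
/-!
The `H`-eigenvalues on `g` lie in `{-2, …, 2}`, so on `J` (eigenvalue `2`) all brackets vanish,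
`f³ = 0`, and `ad (f a)` acts as `-2 L_a`; supercommutativity of the product is then the super
skew-symmetry of `[f a, b]`. For the Jordan identity, evaluate `[[f² (x y), z], w]` in two ways:
directly, and through `f² (x y) = ½ [f² x, f y] + [f x, f² y]` and the super Jacobi identity.
This gives a quartic relation among products in `J`, and a combination of three of its
instances, rewritten by supercommutativity, is the linearized Jordan identity.
-/

/-- The Koszul sign `(-1)^{ij}` for parities `i j : ZMod 2`. -/
noncomputable def sg (i j : ZMod 2) : ℂ := (-1 : ℂ) ^ (i.val * j.val)

/-- A short `sl₂`-Lie superalgebra: a Z/2-graded complex Lie superalgebra `(G, B)`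
together with operators `E F H` satisfying the `sl₂` relations, acting by even
derivations, such that `G` is spanned by `H`-eigenvectors with eigenvalues in
`{-2,-1,0,1,2}` (which, over `ℂ`, is exactly the condition that `G` decomposes as an
`sl₂`-module into copies of the adjoint, the natural and the trivial representations,
i.e. `G ≅ sl₂⊗J ⊕ V⊗M ⊕ D`). -/
structure ShortSL2 {G : Type} [AddCommGroup G] [Module ℂ G]
    (gr : ZMod 2 → Submodule ℂ G)
    (B : G →ₗ[ℂ] G →ₗ[ℂ] G)
    (E F H : G →ₗ[ℂ] G) : Prop where
  bracket_grade : ∀ i j : ZMod 2, ∀ a ∈ gr i, ∀ b ∈ gr j, B a b ∈ gr (i + j)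
  antisymm : ∀ i j : ZMod 2, ∀ a ∈ gr i, ∀ b ∈ gr j, B a b = -(sg i j • B b a)
  jacobi : ∀ i j : ZMod 2, ∀ a ∈ gr i, ∀ b ∈ gr j, ∀ c : G,
      B a (B b c) = B (B a b) c + sg i j • B b (B a c)
  grade_spans : ∀ x : G, ∃ x0 x1 : G, x0 ∈ gr 0 ∧ x1 ∈ gr 1 ∧ x = x0 + x1
  rel_HE : H ∘ₗ E - E ∘ₗ H = 2 • E
  rel_HF : H ∘ₗ F - F ∘ₗ H = -(2 • F)
  rel_EF : E ∘ₗ F - F ∘ₗ E = H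
  derE : ∀ x y : G, E (B x y) = B (E x) y + B x (E y)
  derF : ∀ x y : G, F (B x y) = B (F x) y + B x (F y)
  derH : ∀ x y : G, H (B x y) = B (H x) y + B x (H y)
  evenE : ∀ i : ZMod 2, ∀ x ∈ gr i, E x ∈ gr i
  evenF : ∀ i : ZMod 2, ∀ x ∈ gr i, F x ∈ gr i
  evenH : ∀ i : ZMod 2, ∀ x ∈ gr i, H x ∈ gr i
  short : ∀ x : G, ∃ x2 x1 x0 y1 y2 : G,
      H x2 = (2 : ℂ) • x2 ∧ H x1 = x1 ∧ H x0 = 0 ∧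
      H y1 = (-1 : ℂ) • y1 ∧ H y2 = (-2 : ℂ) • y2 ∧ x = x2 + x1 + x0 + y1 + y2

/-- The induced product `a·b := ½[a, f·b]` on `J(g) = {a : H a = 2a}`. -/
noncomputable def jmul {G : Type} [AddCommGroup G] [Module ℂ G]
    (B : G →ₗ[ℂ] G →ₗ[ℂ] G) (F : G →ₗ[ℂ] G) (a b : G) : G :=
  (2 : ℂ)⁻¹ • B a (F b)

lemma sg_comm (i j : ZMod 2) : sg i j = sg j i := by
  rw [sg, sg, Nat.mul_comm]

lemma sg_sq (i j : ZMod 2) : sg i j ^ 2 = 1 := by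
  rw [sg, ← pow_mul, mul_comm]
  exact (even_two_mul _).neg_one_pow

lemma sg_zero_left (j : ZMod 2) : sg 0 j = 1 := by simp [sg]

lemma sg_zero_right (i : ZMod 2) : sg i 0 = 1 := by simp [sg]

lemma sg_one_one : sg 1 1 = -1 := by norm_num [sg, ZMod.val_one]

lemma sg_add_left (i j k : ZMod 2) : sg (i + j) k = sg i k * sg j k := by
  have hmod : ((i + j).val * k.val) % 2 = (i.val * k.val + j.val * k.val) % 2 := by
    revert i j k; decide
  rw [sg, neg_one_pow_eq_pow_mod_two, hmod, ← neg_one_pow_eq_pow_mod_two, pow_add, sg, sg]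

lemma sg_add_right (i j k : ZMod 2) : sg i (j + k) = sg i j * sg i k := by
  rw [sg_comm, sg_add_left, sg_comm j, sg_comm k]

lemma ZMod.two_cases (i : ZMod 2) : i = 0 ∨ i = 1 := by
  revert i; decide

lemma two_smul_jmul {G : Type} [AddCommGroup G] [Module ℂ G] (B : G →ₗ[ℂ] G →ₗ[ℂ] G)
    (F : G →ₗ[ℂ] G) (u v : G) : (2 : ℂ) • jmul B F u v = B u (F v) := by
  rw [jmul, smul_smul, mul_inv_cancel₀ two_ne_zero, one_smul]

lemma jmul_smul_left {G : Type} [AddCommGroup G] [Module ℂ G] (B : G →ₗ[ℂ] G →ₗ[ℂ] G)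
    (F : G →ₗ[ℂ] G) (c : ℂ) (u v : G) : jmul B F (c • u) v = c • jmul B F u v := by
  rw [jmul, jmul, map_smul, LinearMap.smul_apply, smul_comm]

lemma jmul_smul_right {G : Type} [AddCommGroup G] [Module ℂ G] (B : G →ₗ[ℂ] G →ₗ[ℂ] G)
    (F : G →ₗ[ℂ] G) (c : ℂ) (u v : G) : jmul B F u (c • v) = c • jmul B F u v := by
  rw [jmul, jmul, map_smul, map_smul, smul_comm]

def InJ {G : Type} [AddCommGroup G] [Module ℂ G] (gr : ZMod 2 → Submodule ℂ G)
    (H : G →ₗ[ℂ] G) (p : ZMod 2) (u : G) : Prop :=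
  u ∈ gr p ∧ H u = (2 : ℂ) • u

namespace ShortSL2

variable {G : Type} [AddCommGroup G] [Module ℂ G] {gr : ZMod 2 → Submodule ℂ G}
  {B : G →ₗ[ℂ] G →ₗ[ℂ] G} {E F H : G →ₗ[ℂ] G} {p q r : ZMod 2} {u v x y z w : G}

lemma eq_zero_of_apply_eq_smul (h : ShortSL2 gr B E F H) {μ : ℂ}
    (hv : H v = μ • v) (hμ : μ ∉ ({2, 1, 0, -1, -2} : Set ℂ)) : v = 0 := by
  set W := ⨆ ν ∈ ({2, 1, 0, -1, -2} : Set ℂ), Module.End.eigenspace H ν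
  have hmem : ∀ ν ∈ ({2, 1, 0, -1, -2} : Set ℂ), ∀ x : G, H x = ν • x → x ∈ W :=
    fun ν hν x hx => le_biSup (Module.End.eigenspace H) hν (Module.End.mem_eigenspace_iff.mpr hx)
  obtain ⟨x2, x1, x0, y1, y2, h2, h1, h0, hm1, hm2, rfl⟩ := h.short v
  have hW : x2 + x1 + x0 + y1 + y2 ∈ W := by
    refine add_mem (add_mem (add_mem (add_mem ?_ ?_) ?_) ?_) ?_
    · exact hmem 2 (by simp) _ h2
    · exact hmem 1 (by simp) _ (by rw [h1, one_smul])
    · exact hmem 0 (by simp) _ (by rw [h0, zero_smul])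
    · exact hmem (-1) (by simp) _ hm1
    · exact hmem (-2) (by simp) _ hm2
  exact Submodule.disjoint_def.mp ((Module.End.eigenspaces_iSupIndep H).disjoint_biSup hμ) _
    (Module.End.mem_eigenspace_iff.mpr hv) hW

lemma apply_F_of_apply_eq_smul (h : ShortSL2 gr B E F H) {μ : ℂ}
    (hx : H x = μ • x) : H (F x) = (μ - 2) • F x := by
  have hHF := congrArg (fun φ : G →ₗ[ℂ] G => φ x) h.rel_HF
  simp only [LinearMap.sub_apply, LinearMap.comp_apply, LinearMap.neg_apply,
    LinearMap.smul_apply, hx, map_smul] at hHF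
  linear_combination (norm := module) hHF

lemma apply_bracket_of_apply_eq_smul (h : ShortSL2 gr B E F H) {μ ν : ℂ}
    (hx : H x = μ • x) (hy : H y = ν • y) : H (B x y) = (μ + ν) • B x y := by
  rw [h.derH, hx, hy, map_smul, map_smul, LinearMap.smul_apply, add_smul]

lemma F_cube_eq_zero (h : ShortSL2 gr B E F H) (hu : H u = (2 : ℂ) • u) : F (F (F u)) = 0 := by
  refine h.eq_zero_of_apply_eq_smul (h.apply_F_of_apply_eq_smul
    (h.apply_F_of_apply_eq_smul (h.apply_F_of_apply_eq_smul hu))) ?_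
  norm_num

lemma bracket_eq_zero (h : ShortSL2 gr B E F H) (hu : H u = (2 : ℂ) • u)
    (hv : H v = (2 : ℂ) • v) : B u v = 0 := by
  refine h.eq_zero_of_apply_eq_smul (h.apply_bracket_of_apply_eq_smul hu hv) ?_
  norm_num

lemma bracket_F_left (h : ShortSL2 gr B E F H) (hu : H u = (2 : ℂ) • u)
    (hv : H v = (2 : ℂ) • v) : B (F u) v = -((2 : ℂ) • jmul B F u v) := by
  have hder := h.derF u v
  rw [h.bracket_eq_zero hu hv, map_zero, eq_comm, add_eq_zero_iff_eq_neg] at hder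
  rw [hder, two_smul_jmul]

lemma bracket_F_sq_left (h : ShortSL2 gr B E F H) (hu : H u = (2 : ℂ) • u)
    (hv : H v = (2 : ℂ) • v) :
    B (F (F u)) v = -((2 : ℂ) • F (jmul B F u v)) - B (F u) (F v) := by
  have hder := h.derF (F u) v
  rw [h.bracket_F_left hu hv, map_neg, map_smul] at hder
  rw [hder, add_sub_cancel_right]

lemma F_sq_jmul (h : ShortSL2 gr B E F H) (hv : H v = (2 : ℂ) • v) :
    F (F (jmul B F u v)) = (2 : ℂ)⁻¹ • B (F (F u)) (F v) + B (F u) (F (F v)) := by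
  have hF2 : F (F (B u (F v))) = B (F (F u)) (F v) + (2 : ℂ) • B (F u) (F (F v)) := by
    rw [h.derF, map_add, h.derF, h.derF, h.F_cube_eq_zero hv, map_zero, add_zero]
    module
  rw [← two_smul_jmul, map_smul, map_smul] at hF2
  rw [← smul_right_injective G (two_ne_zero (α := ℂ)) |>.eq_iff, hF2]
  module

lemma apply_jmul (h : ShortSL2 gr B E F H) (hu : H u = (2 : ℂ) • u)
    (hv : H v = (2 : ℂ) • v) :
    H (jmul B F u v) = (2 : ℂ) • jmul B F u v := by
  rw [jmul, map_smul, h.apply_bracket_of_apply_eq_smul hu (h.apply_F_of_apply_eq_smul hv)]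
  module

lemma inJ_jmul (h : ShortSL2 gr B E F H) (hu : InJ gr H p u) (hv : InJ gr H q v) :
    InJ gr H (p + q) (jmul B F u v) :=
  ⟨Submodule.smul_mem _ _ (h.bracket_grade p q u hu.1 _ (h.evenF q v hv.1)),
    h.apply_jmul hu.2 hv.2⟩

lemma jmul_comm (h : ShortSL2 gr B E F H) (hu : InJ gr H p u) (hv : InJ gr H q v) :
    jmul B F u v = sg p q • jmul B F v u := by
  have hanti := h.antisymm p q (F u) (h.evenF p u hu.1) v hv.1
  rw [h.bracket_F_left hu.2 hv.2, ← two_smul_jmul, neg_inj, smul_comm] at hanti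
  exact smul_right_injective G two_ne_zero hanti

lemma bracket_bracket_left (h : ShortSL2 gr B E F H) (hx : x ∈ gr p) (hy : y ∈ gr q) (z : G) :
    B (B x y) z = B x (B y z) - sg p q • B y (B x z) := by
  rw [h.jacobi p q x hx y hy z, add_sub_cancel_right]

lemma bracket_bracket_F_F (h : ShortSL2 gr B E F H) (hu : InJ gr H p u) (hv : InJ gr H q v)
    (hz : H z = (2 : ℂ) • z) :
    B (B (F u) (F v)) z = (4 : ℂ) • jmul B F u (jmul B F v z)
      - ((4 : ℂ) * sg p q) • jmul B F v (jmul B F u z) := by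
  rw [h.bracket_bracket_left (h.evenF p u hu.1) (h.evenF q v hv.1), h.bracket_F_left hv.2 hz,
    h.bracket_F_left hu.2 hz, map_neg, map_smul, map_neg, map_smul,
    h.bracket_F_left hu.2 (h.apply_jmul hv.2 hz), h.bracket_F_left hv.2 (h.apply_jmul hu.2 hz)]
  module

lemma bracket_bracket_F_sq_left (h : ShortSL2 gr B E F H) (hu : InJ gr H p u)
    (hz : InJ gr H r z) (hw : H w = (2 : ℂ) • w) :
    B (B (F (F u)) z) w = (4 : ℂ) • jmul B F (jmul B F u z) w
      - (4 : ℂ) • jmul B F u (jmul B F z w)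
      + ((4 : ℂ) * sg p r) • jmul B F z (jmul B F u w) := by
  rw [h.bracket_F_sq_left hu.2 hz.2, map_sub, map_neg, map_smul, LinearMap.sub_apply,
    LinearMap.neg_apply, LinearMap.smul_apply, h.bracket_F_left (h.apply_jmul hu.2 hz.2) hw,
    h.bracket_bracket_F_F hu hz hw]
  module

lemma bracket_bracket_F_sq_F (h : ShortSL2 gr B E F H) (hx : InJ gr H p x) (hy : InJ gr H q y)
    (hz : H z = (2 : ℂ) • z) :
    B (B (F (F x)) (F y)) z = (4 : ℂ) • F (jmul B F x (jmul B F y z))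
      + (2 : ℂ) • B (F x) (F (jmul B F y z))
      + ((2 : ℂ) * sg p q) • B (F y) (F (jmul B F x z))
      + sg p q • B (F y) (B (F x) (F z)) := by
  rw [h.bracket_bracket_left (h.evenF p _ (h.evenF p x hx.1)) (h.evenF q y hy.1),
    h.bracket_F_left hy.2 hz, h.bracket_F_sq_left hx.2 hz]
  simp only [map_sub, map_neg, map_smul]
  rw [h.bracket_F_sq_left hx.2 (h.apply_jmul hy.2 hz)]
  module

lemma bracket_bracket_F_F_sq (h : ShortSL2 gr B E F H) (hx : InJ gr H p x) (hy : InJ gr H q y)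
    (hz : H z = (2 : ℂ) • z) :
    B (B (F x) (F (F y))) z = -(((4 : ℂ) * sg p q) • F (jmul B F y (jmul B F x z)))
      - (2 : ℂ) • B (F x) (F (jmul B F y z))
      - ((2 : ℂ) * sg p q) • B (F y) (F (jmul B F x z))
      - B (F x) (B (F y) (F z)) := by
  rw [h.bracket_bracket_left (h.evenF p x hx.1) (h.evenF q _ (h.evenF q y hy.1)),
    h.bracket_F_sq_left hy.2 hz, h.bracket_F_left hx.2 hz]
  simp only [map_sub, map_neg, map_smul]
  rw [h.bracket_F_sq_left hy.2 (h.apply_jmul hx.2 hz)]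
  module

lemma bracket_bracket_F_bracket_F_F (h : ShortSL2 gr B E F H) (hx : InJ gr H p x)
    (hy : InJ gr H q y) (hz : InJ gr H r z) (hw : H w = (2 : ℂ) • w) :
    B (B (F x) (B (F y) (F z))) w = -((8 : ℂ) • jmul B F x (jmul B F y (jmul B F z w)))
      + ((8 : ℂ) * sg q r) • jmul B F x (jmul B F z (jmul B F y w))
      + ((8 : ℂ) * (sg p q * sg p r)) • jmul B F y (jmul B F z (jmul B F x w))
      - ((8 : ℂ) * (sg p q * sg p r * sg q r)) • jmul B F z (jmul B F y (jmul B F x w)) := by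
  have hyz : B (F y) (F z) ∈ gr (q + r) :=
    h.bracket_grade q r _ (h.evenF q y hy.1) _ (h.evenF r z hz.1)
  rw [h.bracket_bracket_left (h.evenF p x hx.1) hyz, h.bracket_bracket_F_F hy hz hw,
    h.bracket_F_left hx.2 hw]
  simp only [map_sub, map_neg, map_smul]
  rw [h.bracket_F_left hx.2 (h.apply_jmul hy.2 (h.apply_jmul hz.2 hw)),
    h.bracket_F_left hx.2 (h.apply_jmul hz.2 (h.apply_jmul hy.2 hw)),
    h.bracket_bracket_F_F hy hz (h.apply_jmul hx.2 hw), sg_add_right]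
  module

lemma bracket_bracket_F_sq_jmul (h : ShortSL2 gr B E F H) (hx : InJ gr H p x)
    (hy : InJ gr H q y) (hz : InJ gr H r z) (hw : H w = (2 : ℂ) • w) :
    B (B (F (F (jmul B F x y))) z) w
      = -((4 : ℂ) • jmul B F (jmul B F x (jmul B F y z)) w)
      + ((8 : ℂ) * sg p q) • jmul B F (jmul B F y (jmul B F x z)) w
      - (4 : ℂ) • jmul B F x (jmul B F (jmul B F y z) w)
      + ((4 : ℂ) * (sg p q * sg p r)) • jmul B F (jmul B F y z) (jmul B F x w)
      - ((4 : ℂ) * sg p q) • jmul B F y (jmul B F (jmul B F x z) w)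
      + ((4 : ℂ) * sg q r) • jmul B F (jmul B F x z) (jmul B F y w)
      - ((4 : ℂ) * sg p q) • jmul B F y (jmul B F x (jmul B F z w))
      - ((4 : ℂ) * (sg p q * sg p r)) • jmul B F y (jmul B F z (jmul B F x w))
      - ((4 : ℂ) * sg q r) • jmul B F x (jmul B F z (jmul B F y w))
      - ((4 : ℂ) * (sg p r * sg q r)) • jmul B F z (jmul B F x (jmul B F y w))
      + (8 : ℂ) • jmul B F x (jmul B F y (jmul B F z w))
      + ((8 : ℂ) * (sg p q * sg p r * sg q r)) • jmul B F z (jmul B F y (jmul B F x w)) := by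
  have hyz := h.inJ_jmul hy hz
  have hxz := h.inJ_jmul hx hz
  rw [h.F_sq_jmul hy.2]
  simp only [map_add, map_smul, LinearMap.add_apply, LinearMap.smul_apply]
  rw [h.bracket_bracket_F_sq_F hx hy hz.2, h.bracket_bracket_F_F_sq hx hy hz.2]
  simp only [map_add, map_smul, map_neg, map_sub, LinearMap.add_apply, LinearMap.smul_apply,
    LinearMap.neg_apply, LinearMap.sub_apply]
  rw [h.bracket_F_left (h.apply_jmul hx.2 hyz.2) hw,
    h.bracket_F_left (h.apply_jmul hy.2 hxz.2) hw,
    h.bracket_bracket_F_F hx hyz hw, h.bracket_bracket_F_F hy hxz hw,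
    h.bracket_bracket_F_bracket_F_F hy hx hz hw, h.bracket_bracket_F_bracket_F_F hx hy hz hw,
    sg_add_right, sg_add_right]
  simp only [sg_comm q p]
  match_scalars <;> ring_nf <;> simp only [sg_sq] <;> ring

/-- Both sides are `[[f² (x y), z], w]`; the right one is computed through `F_sq_jmul`. -/
lemma jmul_quartic_identity (h : ShortSL2 gr B E F H) (hx : InJ gr H p x) (hy : InJ gr H q y)
    (hz : InJ gr H r z) (hw : H w = (2 : ℂ) • w) :
    (4 : ℂ) • jmul B F (jmul B F (jmul B F x y) z) w
      - (4 : ℂ) • jmul B F (jmul B F x y) (jmul B F z w)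
      + ((4 : ℂ) * (sg p r * sg q r)) • jmul B F z (jmul B F (jmul B F x y) w)
    = -((4 : ℂ) • jmul B F (jmul B F x (jmul B F y z)) w)
      + ((8 : ℂ) * sg p q) • jmul B F (jmul B F y (jmul B F x z)) w
      - (4 : ℂ) • jmul B F x (jmul B F (jmul B F y z) w)
      + ((4 : ℂ) * (sg p q * sg p r)) • jmul B F (jmul B F y z) (jmul B F x w)
      - ((4 : ℂ) * sg p q) • jmul B F y (jmul B F (jmul B F x z) w)
      + ((4 : ℂ) * sg q r) • jmul B F (jmul B F x z) (jmul B F y w)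
      - ((4 : ℂ) * sg p q) • jmul B F y (jmul B F x (jmul B F z w))
      - ((4 : ℂ) * (sg p q * sg p r)) • jmul B F y (jmul B F z (jmul B F x w))
      - ((4 : ℂ) * sg q r) • jmul B F x (jmul B F z (jmul B F y w))
      - ((4 : ℂ) * (sg p r * sg q r)) • jmul B F z (jmul B F x (jmul B F y w))
      + (8 : ℂ) • jmul B F x (jmul B F y (jmul B F z w))
      + ((8 : ℂ) * (sg p q * sg p r * sg q r)) • jmul B F z (jmul B F y (jmul B F x w)) := by
  have hxyzw := h.bracket_bracket_F_sq_left (h.inJ_jmul hx hy) hz hw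
  rw [sg_add_left, h.bracket_bracket_F_sq_jmul hx hy hz hw] at hxyzw
  exact hxyzw.symm

lemma jordan_identity (h : ShortSL2 gr B E F H) {pa pb pc pd : ZMod 2} {a b c d : G}
    (ha : InJ gr H pa a) (hb : InJ gr H pb b) (hc : InJ gr H pc c) (hd : InJ gr H pd d) :
    jmul B F (jmul B F a b) (jmul B F c d)
      + sg pb pc • jmul B F (jmul B F a c) (jmul B F b d)
      + (sg pb pd * sg pc pd) • jmul B F (jmul B F a d) (jmul B F b c)
    = jmul B F (jmul B F (jmul B F a b) c) d
      + (sg pb pc * sg pb pd * sg pc pd) • jmul B F (jmul B F (jmul B F a d) c) b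
      + (sg pa pb * sg pa pc * sg pa pd * sg pc pd) •
          jmul B F (jmul B F (jmul B F b d) c) a := by
  have I1 := h.jmul_quartic_identity ha hb hc hd.2
  have I2 := h.jmul_quartic_identity hb ha hc hd.2
  have I3 := h.jmul_quartic_identity ha hd hb hc.2
  have hab := h.inJ_jmul ha hb
  have hac := h.inJ_jmul ha hc
  have had := h.inJ_jmul ha hd
  have hbc := h.inJ_jmul hb hc
  have hbd := h.inJ_jmul hb hd
  -- one supercommutative normal form for all products occurring in `I1`, `I2`, `I3` and the goal
  simp only [h.jmul_comm hb ha, h.jmul_comm hd hc, h.jmul_comm hd hb,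
    h.jmul_comm hbd hac, h.jmul_comm hbc had, h.jmul_comm hd (h.inJ_jmul hab hc),
    h.jmul_comm had hc, h.jmul_comm (h.inJ_jmul hc had) hb,
    h.jmul_comm hbd hc, h.jmul_comm (h.inJ_jmul hc hbd) ha,
    h.jmul_comm hd hab, h.jmul_comm (h.inJ_jmul hab hd) hc,
    h.jmul_comm hd (h.inJ_jmul ha hbc), h.jmul_comm hd (h.inJ_jmul hb hac),
    h.jmul_comm hd hbc, h.jmul_comm hd hac,
    h.jmul_comm (h.inJ_jmul ha hbd) hc, h.jmul_comm had hb, h.jmul_comm (h.inJ_jmul hb had) hc,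
    jmul_smul_left, jmul_smul_right, smul_smul] at I1 I2 I3 ⊢
  linear_combination (norm := skip)
    (-(1 : ℂ) / 12) • I1 + (-sg pa pb / 12) • I2 + (-(sg pb pd * sg pc pd) / 12) • I3
  rcases ZMod.two_cases pa with rfl | rfl <;> rcases ZMod.two_cases pb with rfl | rfl <;>
    rcases ZMod.two_cases pc with rfl | rfl <;> rcases ZMod.two_cases pd with rfl | rfl <;>
    simp only [sg_add_left, sg_add_right, sg_zero_left, sg_zero_right, sg_one_one] <;> module

end ShortSL2

/-- If `g` is a short `sl₂`-Lie superalgebra, then `J = {a : H a = 2a}`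
with the product `2 a·b = [a, f b]` is a Jordan superalgebra: the product is closed on
`J`, homogeneous of degree 0, supercommutative, and satisfies the 4-multilinear super
Jordan identity. -/
theorem shortSL2_gives_superJordan
    {G : Type} [AddCommGroup G] [Module ℂ G]
    (gr : ZMod 2 → Submodule ℂ G)
    (B : G →ₗ[ℂ] G →ₗ[ℂ] G) (E F H : G →ₗ[ℂ] G)
    (h : ShortSL2 gr B E F H) :
    (∀ i j : ZMod 2, ∀ a ∈ gr i, ∀ b ∈ gr j,
        H a = (2 : ℂ) • a → H b = (2 : ℂ) • b →
        jmul B F a b ∈ gr (i + j) ∧ H (jmul B F a b) = (2 : ℂ) • jmul B F a b)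
    ∧
    (∀ i j : ZMod 2, ∀ a ∈ gr i, ∀ b ∈ gr j,
        H a = (2 : ℂ) • a → H b = (2 : ℂ) • b →
        jmul B F a b = sg i j • jmul B F b a)
    ∧
    (∀ pa pb pc pd : ZMod 2, ∀ a ∈ gr pa, ∀ b ∈ gr pb, ∀ c ∈ gr pc, ∀ d ∈ gr pd,
        H a = (2 : ℂ) • a → H b = (2 : ℂ) • b → H c = (2 : ℂ) • c → H d = (2 : ℂ) • d →
        jmul B F (jmul B F a b) (jmul B F c d)
          + sg pb pc • jmul B F (jmul B F a c) (jmul B F b d)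
          + (sg pb pd * sg pc pd) • jmul B F (jmul B F a d) (jmul B F b c)
        = jmul B F (jmul B F (jmul B F a b) c) d
          + (sg pb pc * sg pb pd * sg pc pd) • jmul B F (jmul B F (jmul B F a d) c) b
          + (sg pa pb * sg pa pc * sg pa pd * sg pc pd) •
              jmul B F (jmul B F (jmul B F b d) c) a) :=
  ⟨fun _ _ _ ha _ hb h2a h2b => h.inJ_jmul ⟨ha, h2a⟩ ⟨hb, h2b⟩,
    fun _ _ _ ha _ hb h2a h2b => h.jmul_comm ⟨ha, h2a⟩ ⟨hb, h2b⟩,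
    fun _ _ _ _ _ ha _ hb _ hc _ hd h2a h2b h2c h2d =>
      h.jordan_identity ⟨ha, h2a⟩ ⟨hb, h2b⟩ ⟨hc, h2c⟩ ⟨hd, h2d⟩⟩
end

section
/- Let g be a short sl₂-Lie superalgebra with decomposition g = sl₂ ⊗ J ⊕ V ⊗ M ⊕ D, with operations a·b, a•m, m⋆n determined by the bracket as in the Tits construction. Then for all homogeneous a, b ∈ J and m ∈ M: (a·b)•m = ½(a•(b•m) + (−1)^{|a||b|} b•(a•m)); that is, M is a special Jordan supermodule over J. -/
/-!
`F` lowers `H`-eigenvalues by `2` and brackets add them, while a short `sl₂`-superalgebra has no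
eigenvalues outside `{-2, …, 2}`. Hence for `m ∈ M` we get `F (F m) = 0` (eigenvalue `-3`), and for
`a, b ∈ J` we get `[b, [a, F m]] = 0` (eigenvalue `3`). Applying the derivation `F` to the latter
gives `[F b, [a, F m]] = -[b, [F a, F m]]`, and the super Jacobi identity for `[[a, F b], F m]`
then turns into the special Jordan identity.
-/

namespace ShortSL2

variable {G : Type} [AddCommGroup G] [Module ℂ G]

theorem eq_zero_of_apply_eq_smul_s4 {gr : ZMod 2 → Submodule ℂ G} {B : G →ₗ[ℂ] G →ₗ[ℂ] G}
    {E F H : G →ₗ[ℂ] G} (h : ShortSL2 gr B E F H) {c : ℂ}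
    (hc : c ∉ ({2, 1, 0, -1, -2} : Set ℂ)) {x : G} (hx : H x = c • x) : x = 0 := by
  obtain ⟨x2, x1, x0, y1, y2, h2, h1, h0, hm1, hm2, rfl⟩ := h.short x
  have hmem : ∀ μ ∈ ({2, 1, 0, -1, -2} : Set ℂ), ∀ v, H v = μ • v →
      v ∈ ⨆ (ν) (_ : ν ≠ c), Module.End.eigenspace H ν := fun μ hμ v hv =>
    Submodule.mem_iSup_of_mem μ <| Submodule.mem_iSup_of_mem (ne_of_mem_of_not_mem hμ hc)
      (Module.End.mem_eigenspace_iff.mpr hv)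
  have hsum : x2 + x1 + x0 + y1 + y2 ∈ ⨆ (ν) (_ : ν ≠ c), Module.End.eigenspace H ν := by
    refine add_mem (add_mem (add_mem (add_mem ?_ ?_) ?_) ?_) ?_
    · exact hmem 2 (by simp) x2 h2
    · exact hmem 1 (by simp) x1 (by rw [h1, one_smul])
    · exact hmem 0 (by simp) x0 (by rw [h0, zero_smul])
    · exact hmem (-1) (by simp) y1 hm1
    · exact hmem (-2) (by simp) y2 hm2
  exact Submodule.disjoint_def.mp (Module.End.eigenspaces_iSupIndep H c) _
    (Module.End.mem_eigenspace_iff.mpr hx) hsum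

theorem apply_F_eq_smul {F H : G →ₗ[ℂ] G} (hHF : H ∘ₗ F - F ∘ₗ H = -(2 • F)) {c : ℂ} {v : G}
    (hv : H v = c • v) : H (F v) = (c - 2) • F v := by
  have hHFv := LinearMap.congr_fun hHF v
  simp only [LinearMap.sub_apply, LinearMap.comp_apply, LinearMap.neg_apply,
    LinearMap.smul_apply, hv, map_smul] at hHFv
  rw [sub_eq_iff_eq_add] at hHFv
  rw [hHFv, sub_smul, two_nsmul, two_smul]
  abel

theorem apply_bracket_eq_smul {B : G →ₗ[ℂ] G →ₗ[ℂ] G} {H : G →ₗ[ℂ] G}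
    (hH : ∀ x y, H (B x y) = B (H x) y + B x (H y)) {c d : ℂ} {x y : G}
    (hx : H x = c • x) (hy : H y = d • y) : H (B x y) = (c + d) • B x y := by
  rw [hH, hx, hy, map_smul, map_smul, LinearMap.smul_apply, add_smul]

end ShortSL2

/-- In a short `sl₂`-Lie superalgebra, with `2 a·b = [a, f b]` on
`J = {a : H a = 2a}` and `a•m = [a, f m]` for `m ∈ M = {m : H m = m}`, one has
`(a·b)•m = ½(a•(b•m) + (−1)^{|a||b|} b•(a•m))`: `M` is a special Jordan supermodule. -/
theorem shortSL2_special_module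
    {G : Type} [AddCommGroup G] [Module ℂ G]
    (gr : ZMod 2 → Submodule ℂ G)
    (B : G →ₗ[ℂ] G →ₗ[ℂ] G) (E F H : G →ₗ[ℂ] G)
    (h : ShortSL2 gr B E F H) :
    ∀ pa pb pm : ZMod 2, ∀ a ∈ gr pa, ∀ b ∈ gr pb, ∀ m ∈ gr pm,
      H a = (2 : ℂ) • a → H b = (2 : ℂ) • b → H m = m →
      B ((2 : ℂ)⁻¹ • B a (F b)) (F m)
        = (2 : ℂ)⁻¹ •
            (B a (F (B b (F m))) + sg pa pb • B b (F (B a (F m)))) := by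
  intro pa pb pm a ha b hb m _ hHa hHb hHm
  have hFm : H (F m) = (-1 : ℂ) • F m := by
    convert ShortSL2.apply_F_eq_smul h.rel_HF (c := 1) (by rw [hHm, one_smul]) using 2
    norm_num
  have hFFm : F (F m) = 0 :=
    h.eq_zero_of_apply_eq_smul_s4 (by norm_num) (ShortSL2.apply_F_eq_smul h.rel_HF hFm)
  have hF_bracket_Fm : ∀ x, F (B x (F m)) = B (F x) (F m) := fun x => by
    rw [h.derF, hFFm, map_zero, add_zero]
  have hbaFm : B b (B a (F m)) = 0 := h.eq_zero_of_apply_eq_smul_s4 (by norm_num) <|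
    ShortSL2.apply_bracket_eq_smul h.derH hHb <| ShortSL2.apply_bracket_eq_smul h.derH hHa hFm
  have hFb_aFm : B (F b) (B a (F m)) = -B b (B (F a) (F m)) := by
    have := h.derF b (B a (F m))
    rw [hbaFm, map_zero, hF_bracket_Fm] at this
    exact eq_neg_of_add_eq_zero_left this.symm
  rw [hF_bracket_Fm, hF_bracket_Fm, h.jacobi pa pb a ha (F b) (h.evenF pb b hb), hFb_aFm,
    map_smul, LinearMap.smul_apply]
  module
end

section
/- Let (J, M) be a J-ternary superalgebra and define the endomorphisms ⟨a,b⟩ and ∂_{m,n} of J ⊕ M by ⟨a,b⟩(c) = a·(b·c) − (−1)^{|a||b|}b·(a·c), 4⟨a,b⟩(m) = a•(b•m) − (−1)^{|a||b|}b•(a•m), 2∂_{m,n}(a) = (−1)^{|a|(|m|+|n|)}(a•m)⋆n − (−1)^{|a||n|}m⋆(a•n), ∂_{m,n}(r) = ½(m⋆n)•r − (m,n,r). Then ∂_{m,n} is a superderivation of the operation ⋆, i.e., ∂_{m,n}(r⋆s) = ∂_{m,n}(r)⋆s + (−1)^{|r|(|m|+|n|)} r⋆∂_{m,n}(s) for all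 homogeneous r, s ∈ M. -/
/-- A `J`-ternary superalgebra: a Jordan superalgebra `(J, cd)`, a special Jordan
`J`-supermodule `(M, bu)`, a super-anticommutative map `st : M⊗M → J` and an even
trilinear product `tp` on `M` satisfying the axioms SJT1–SJT6. -/
structure JTern {J M : Type} [AddCommGroup J] [Module ℂ J] [AddCommGroup M] [Module ℂ M]
    (grJ : ZMod 2 → Submodule ℂ J) (grM : ZMod 2 → Submodule ℂ M)
    (cd : J →ₗ[ℂ] J →ₗ[ℂ] J) (bu : J →ₗ[ℂ] M →ₗ[ℂ] M)
    (st : M →ₗ[ℂ] M →ₗ[ℂ] J) (tp : M →ₗ[ℂ] M →ₗ[ℂ] M →ₗ[ℂ] M) : Prop where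
  grade_cd : ∀ p q : ZMod 2, ∀ a ∈ grJ p, ∀ b ∈ grJ q, cd a b ∈ grJ (p + q)
  grade_bu : ∀ p q : ZMod 2, ∀ a ∈ grJ p, ∀ m ∈ grM q, bu a m ∈ grM (p + q)
  grade_st : ∀ p q : ZMod 2, ∀ m ∈ grM p, ∀ n ∈ grM q, st m n ∈ grJ (p + q)
  grade_tp : ∀ p q r : ZMod 2, ∀ m ∈ grM p, ∀ n ∈ grM q, ∀ s ∈ grM r,
      tp m n s ∈ grM (p + q + r)
  comm : ∀ p q : ZMod 2, ∀ a ∈ grJ p, ∀ b ∈ grJ q, cd a b = sg p q • cd b a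
  jordan : ∀ p q r s : ZMod 2, ∀ a ∈ grJ p, ∀ b ∈ grJ q, ∀ c ∈ grJ r, ∀ d ∈ grJ s,
      cd (cd a b) (cd c d) + sg q r • cd (cd a c) (cd b d)
        + (sg q s * sg r s) • cd (cd a d) (cd b c)
      = cd (cd (cd a b) c) d + (sg q r * sg q s * sg r s) • cd (cd (cd a d) c) b
        + (sg p q * sg p r * sg p s * sg r s) • cd (cd (cd b d) c) a
  special : ∀ p q : ZMod 2, ∀ a ∈ grJ p, ∀ b ∈ grJ q, ∀ m : M,
      bu (cd a b) m = (2 : ℂ)⁻¹ • (bu a (bu b m) + sg p q • bu b (bu a m))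
  st_anti : ∀ p q : ZMod 2, ∀ m ∈ grM p, ∀ n ∈ grM q, st m n = -(sg p q • st n m)
  sjt1 : ∀ p q r : ZMod 2, ∀ a ∈ grJ p, ∀ m ∈ grM q, ∀ n ∈ grM r,
      cd a (st m n) = (2 : ℂ)⁻¹ • (st (bu a m) n + sg p q • st m (bu a n))
  sjt2 : ∀ p q r s : ZMod 2, ∀ a ∈ grJ p, ∀ m ∈ grM q, ∀ n ∈ grM r, ∀ t ∈ grM s,
      bu a (tp m n t) = tp (bu a m) n t - sg p q • tp m (bu a n) t
        + sg p (q + r) • tp m n (bu a t)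
  sjt3 : ∀ p q r : ZMod 2, ∀ m ∈ grM p, ∀ n ∈ grM q, ∀ t ∈ grM r,
      tp m n t = (sg p (q + r) * sg q r) • tp t n m - sg q r • bu (st m t) n
  sjt4 : ∀ p q r : ZMod 2, ∀ m ∈ grM p, ∀ n ∈ grM q, ∀ t ∈ grM r,
      tp m n t = sg p q • tp n m t + bu (st m n) t
  sjt5 : ∀ p q r s : ZMod 2, ∀ m ∈ grM p, ∀ n ∈ grM q, ∀ u ∈ grM r, ∀ t ∈ grM s,
      st (tp m n u) t + sg r (p + q) • st u (tp m n t)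
        = sg q (r + s) • st m (bu (st u t) n)
  sjt6 : ∀ p q r s w : ZMod 2,
      ∀ m ∈ grM p, ∀ n ∈ grM q, ∀ u ∈ grM r, ∀ t ∈ grM s, ∀ v ∈ grM w,
      tp m n (tp u t v) = tp (tp m n u) t v
        + (sg r (p + q) * sg p q) • tp u (tp n m t) v
        + sg (p + q) (r + s) • tp u t (tp m n v)

lemma sg_mul_self (i j : ZMod 2) : sg i j * sg i j = 1 := by
  rw [sg, ← mul_pow, neg_one_mul, neg_neg, one_pow]

lemma sg_add_left_mul_sg (i j k : ZMod 2) : sg (i + j) k * sg k i = sg k j := by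
  rw [sg_add_left, sg_comm i k, sg_comm j k, mul_right_comm, sg_mul_self, one_mul]

namespace JTern

variable {J M : Type} [AddCommGroup J] [Module ℂ J] [AddCommGroup M] [Module ℂ M]
  {grJ : ZMod 2 → Submodule ℂ J} {grM : ZMod 2 → Submodule ℂ M}
  {cd : J →ₗ[ℂ] J →ₗ[ℂ] J} {bu : J →ₗ[ℂ] M →ₗ[ℂ] M}
  {st : M →ₗ[ℂ] M →ₗ[ℂ] J} {tp : M →ₗ[ℂ] M →ₗ[ℂ] M →ₗ[ℂ] M}

lemma st_half_bu_add_st_half_bu (h : JTern grJ grM cd bu st tp) {p r s : ZMod 2}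
    {a : J} (ha : a ∈ grJ p) {u t : M} (hu : u ∈ grM r) (ht : t ∈ grM s) :
    st ((2 : ℂ)⁻¹ • bu a u) t + sg r p • st u ((2 : ℂ)⁻¹ • bu a t) = cd a (st u t) := by
  rw [h.sjt1 p r s a ha u hu t ht, sg_comm r p]
  simp only [map_smul, LinearMap.smul_apply, smul_add, smul_comm _ (sg p r)]

lemma cd_st_st (h : JTern grJ grM cd bu st tp) {p q r s : ZMod 2}
    {m n u t : M} (hm : m ∈ grM p) (hn : n ∈ grM q) (hu : u ∈ grM r) (ht : t ∈ grM s) :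
    cd (st m n) (st u t) = (2 : ℂ)⁻¹ •
      (sg (r + s) (p + q) • st (bu (st u t) m) n + sg (r + s) q • st m (bu (st u t) n)) := by
  have hmn := h.grade_st p q m hm n hn
  have hut := h.grade_st r s u hu t ht
  rw [h.comm _ _ _ hmn _ hut, h.sjt1 _ p q _ hut m hm n hn, smul_comm, smul_add, smul_smul,
    sg_add_left_mul_sg, sg_comm (p + q)]

end JTern

/-- In a `J`-ternary superalgebra, `∂_{m,n}` is a superderivation of the
operation `⋆` : `∂_{m,n}(r⋆s) = ∂_{m,n}(r)⋆s + (−1)^{|r|(|m|+|n|)} r⋆∂_{m,n}(s)`,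
where on `J` one has `2∂_{m,n}(a) = (−1)^{|a|(|m|+|n|)}(a•m)⋆n − (−1)^{|a||n|}m⋆(a•n)`
and on `M`, `∂_{m,n}(r) = ½(m⋆n)•r − (m,n,r)`. -/
theorem jtern_partial_derives_star
    {J M : Type} [AddCommGroup J] [Module ℂ J] [AddCommGroup M] [Module ℂ M]
    (grJ : ZMod 2 → Submodule ℂ J) (grM : ZMod 2 → Submodule ℂ M)
    (cd : J →ₗ[ℂ] J →ₗ[ℂ] J) (bu : J →ₗ[ℂ] M →ₗ[ℂ] M)
    (st : M →ₗ[ℂ] M →ₗ[ℂ] J) (tp : M →ₗ[ℂ] M →ₗ[ℂ] M →ₗ[ℂ] M)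
    (h : JTern grJ grM cd bu st tp) :
    ∀ p q r s : ZMod 2, ∀ m ∈ grM p, ∀ n ∈ grM q, ∀ u ∈ grM r, ∀ t ∈ grM s,
      (2 : ℂ)⁻¹ •
          (sg (r + s) (p + q) • st (bu (st u t) m) n
            - sg (r + s) q • st m (bu (st u t) n))
        = st ((2 : ℂ)⁻¹ • bu (st m n) u - tp m n u) t
          + sg r (p + q) • st u ((2 : ℂ)⁻¹ • bu (st m n) t - tp m n t) := by
  intro p q r s m hm n hn u hu t ht
  have half_bu := h.st_half_bu_add_st_half_bu (h.grade_st p q m hm n hn) hu ht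
  have commuted := h.cd_st_st hm hn hu ht
  have triple := h.sjt5 p q r s m hm n hn u hu t ht
  rw [sg_comm q] at triple
  simp only [map_sub, LinearMap.sub_apply, smul_sub]
  linear_combination (norm := module) triple - half_bu - commuted
end

section
/- Let (J, M) be a J-ternary superalgebra with ∂_{m,n} defined on M by ∂_{m,n}(r) = ½(m⋆n)•r − (m,n,r). Then ∂_{m,n} is a superderivation of the action •: ∂_{m,n}(a•r) = ∂_{m,n}(a)•r + (−1)^{|a|(|m|+|n|)} a•∂_{m,n}(r) for all homogeneous a ∈ J, r ∈ M, where 2∂_{m,n}(a) = (−1)^{|a|(|m|+|n|)}(a•m)⋆n − (−1)^{|a||n|}m⋆(a•n). -/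
namespace JTern

variable {J M : Type} [AddCommGroup J] [Module ℂ J] [AddCommGroup M] [Module ℂ M]
  {grJ : ZMod 2 → Submodule ℂ J} {grM : ZMod 2 → Submodule ℂ M}
  {cd : J →ₗ[ℂ] J →ₗ[ℂ] J} {bu : J →ₗ[ℂ] M →ₗ[ℂ] M}
  {st : M →ₗ[ℂ] M →ₗ[ℂ] J} {tp : M →ₗ[ℂ] M →ₗ[ℂ] M →ₗ[ℂ] M}
  {p q r s : ZMod 2} {a : J} {m n t : M}

theorem bu_st_apply (h : JTern grJ grM cd bu st tp) (hm : m ∈ grM q) (hn : n ∈ grM r)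
    (ht : t ∈ grM s) : bu (st m n) t = tp m n t - sg q r • tp n m t := by
  rw [h.sjt4 q r s m hm n hn t ht, add_sub_cancel_left]

theorem half_bu_st_sub_tp (h : JTern grJ grM cd bu st tp) (hm : m ∈ grM q) (hn : n ∈ grM r)
    (ht : t ∈ grM s) :
    (2 : ℂ)⁻¹ • bu (st m n) t - tp m n t = -((2 : ℂ)⁻¹ • (tp m n t + sg q r • tp n m t)) := by
  rw [h.bu_st_apply hm hn ht]
  module

theorem tp_bu_right (h : JTern grJ grM cd bu st tp) (ha : a ∈ grJ p) (hm : m ∈ grM q)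
    (hn : n ∈ grM r) (ht : t ∈ grM s) :
    tp m n (bu a t) = sg p (q + r) • (bu a (tp m n t) - tp (bu a m) n t)
      + sg p r • tp m (bu a n) t := by
  have hsign : sg p (q + r) * sg p q = sg p r := by
    rw [sg_add_right, mul_right_comm, sg_mul_self, one_mul]
  linear_combination (norm := module) (-sg p (q + r)) • h.sjt2 p q r s a ha m hm n hn t ht
    - (sg_mul_self p (q + r)) • tp m n (bu a t) + hsign • tp m (bu a n) t

end JTern

/-- In a `J`-ternary superalgebra, `∂_{m,n}` is a superderivation of the
action `•` : `∂_{m,n}(a•r) = ∂_{m,n}(a)•r + (−1)^{|a|(|m|+|n|)} a•∂_{m,n}(r)`, where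
`2∂_{m,n}(a) = (−1)^{|a|(|m|+|n|)}(a•m)⋆n − (−1)^{|a||n|}m⋆(a•n)` on `J` and
`∂_{m,n}(r) = ½(m⋆n)•r − (m,n,r)` on `M`. -/
theorem jtern_partial_derives_bullet
    {J M : Type} [AddCommGroup J] [Module ℂ J] [AddCommGroup M] [Module ℂ M]
    (grJ : ZMod 2 → Submodule ℂ J) (grM : ZMod 2 → Submodule ℂ M)
    (cd : J →ₗ[ℂ] J →ₗ[ℂ] J) (bu : J →ₗ[ℂ] M →ₗ[ℂ] M)
    (st : M →ₗ[ℂ] M →ₗ[ℂ] J) (tp : M →ₗ[ℂ] M →ₗ[ℂ] M →ₗ[ℂ] M)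
    (h : JTern grJ grM cd bu st tp) :
    ∀ p q r s : ZMod 2, ∀ a ∈ grJ p, ∀ m ∈ grM q, ∀ n ∈ grM r, ∀ t ∈ grM s,
      (2 : ℂ)⁻¹ • bu (st m n) (bu a t) - tp m n (bu a t)
        = bu ((2 : ℂ)⁻¹ •
              (sg p (q + r) • st (bu a m) n - sg p r • st m (bu a n))) t
          + sg p (q + r) • bu a ((2 : ℂ)⁻¹ • bu (st m n) t - tp m n t) := by
  intro p q r s a ha m hm n hn t ht
  have ham := h.grade_bu p q a ha m hm
  have han := h.grade_bu p r a ha n hn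
  have hat := h.grade_bu p s a ha t ht
  rw [h.half_bu_st_sub_tp hm hn hat, h.half_bu_st_sub_tp hm hn ht, h.tp_bu_right ha hm hn ht,
    h.tp_bu_right ha hn hm ht]
  simp only [map_sub, map_smul, map_neg, map_add, LinearMap.sub_apply, LinearMap.smul_apply]
  rw [h.bu_st_apply ham hn ht, h.bu_st_apply hm han ht, add_comm r q]
  have hsign₁ : sg p r * sg q (p + r) = sg p (q + r) * sg q r := by
    rw [sg_add_right, sg_add_right, sg_comm q p]; ring
  have hsign₂ : sg p (q + r) * sg (p + q) r = sg p q * sg q r := by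
    rw [sg_add_right, sg_add_left]
    linear_combination (sg p q * sg q r) * sg_mul_self p r
  linear_combination (norm := module)
    (2 : ℂ)⁻¹ • (hsign₂ • tp n (bu a m) t - hsign₁ • tp (bu a n) m t)
end

section
/- Let J be a (non-super, purely even) Jordan algebra over a field of characteristic 0, let R(J) ⊆ J⊗J be the span of elements a⊗b + b⊗a and (a·b)⊗c + (b·c)⊗a + (c·a)⊗b for a,b,c ∈ J, and let B(J) = (J⊗J)/R(J). Then for all a,b,c,d ∈ J: ⟨a,b⟩(c)⊗d + c⊗⟨a,b⟩(d) + ⟨c,d⟩(a)⊗b + a⊗⟨c,d⟩(b) ∈ R(J), where ⟨a,b⟩(x) = a·(b·x) − b·(a·x). -/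
/-!
In `B(J) = (J ⊗ J) / R(J)` the class of `x ⊗ y` is a bilinear form `β` which is antisymmetric and
satisfies the cyclic identity `β(uv, w) + β(vw, u) + β(wu, v) = 0`. For any such form on a
commutative algebra, `β(⟨a,b⟩c, d) + β(c, ⟨a,b⟩d) + β(⟨c,d⟩a, b) + β(a, ⟨c,d⟩b)` is, up to
antisymmetry, the signed sum of the cyclic identities for `(a, c, bd)`, `(a, d, bc)`, `(b, c, ad)`
and `(b, d, ac)`.
-/

open TensorProduct

theorem cyclic_antisymm_apply_innerDerivation_eq_zero {R M N : Type*} [CommRing R]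
    [AddCommGroup M] [Module R M] [AddCommGroup N] [Module R N]
    (mul : M →ₗ[R] M →ₗ[R] M) (hcomm : ∀ a b : M, mul a b = mul b a)
    (β : M →ₗ[R] M →ₗ[R] N) (hanti : ∀ u v : M, β u v + β v u = 0)
    (hcyc : ∀ u v w : M, β (mul u v) w + β (mul v w) u + β (mul w u) v = 0) (a b c d : M) :
    β (mul a (mul b c) - mul b (mul a c)) d + β c (mul a (mul b d) - mul b (mul a d))
      + β (mul c (mul d a) - mul d (mul c a)) b + β a (mul c (mul d b) - mul d (mul c b))
      = 0 := by
  linear_combination (norm := (simp only [map_sub, LinearMap.sub_apply, hcomm]; module))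
    -hcyc a c (mul b d) + hcyc a d (mul b c) + hcyc b c (mul a d) - hcyc b d (mul a c)
    + hanti c (mul (mul b d) a) - hanti c (mul (mul a d) b)
    + hanti a (mul (mul b d) c) - hanti a (mul (mul b c) d)
    + hanti (mul a c) (mul b d) - hanti (mul a d) (mul b c)

theorem inner_action_in_relations_general
    {J : Type} [AddCommGroup J] [Module ℂ J]
    (mul : J →ₗ[ℂ] J →ₗ[ℂ] J)
    (hcomm : ∀ a b : J, mul a b = mul b a) :
    ∀ a b c d : J,
      (mul a (mul b c) - mul b (mul a c)) ⊗ₜ[ℂ] d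
        + c ⊗ₜ[ℂ] (mul a (mul b d) - mul b (mul a d))
        + (mul c (mul d a) - mul d (mul c a)) ⊗ₜ[ℂ] b
        + a ⊗ₜ[ℂ] (mul c (mul d b) - mul d (mul c b))
      ∈ Submodule.span ℂ
          ({x : J ⊗[ℂ] J | ∃ u v : J, x = u ⊗ₜ[ℂ] v + v ⊗ₜ[ℂ] u} ∪
           {x : J ⊗[ℂ] J | ∃ u v w : J,
              x = (mul u v) ⊗ₜ[ℂ] w + (mul v w) ⊗ₜ[ℂ] u + (mul w u) ⊗ₜ[ℂ] v}) := by
  intro a b c d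
  set relations := Submodule.span ℂ
    ({x : J ⊗[ℂ] J | ∃ u v : J, x = u ⊗ₜ[ℂ] v + v ⊗ₜ[ℂ] u} ∪
     {x : J ⊗[ℂ] J | ∃ u v w : J,
        x = (mul u v) ⊗ₜ[ℂ] w + (mul v w) ⊗ₜ[ℂ] u + (mul w u) ⊗ₜ[ℂ] v})
  let β : J →ₗ[ℂ] J →ₗ[ℂ] J ⊗[ℂ] J ⧸ relations := (TensorProduct.mk ℂ J J).compr₂ relations.mkQ
  have hanti (u v : J) : β u v + β v u = 0 :=
    (Submodule.Quotient.mk_eq_zero _).mpr (Submodule.subset_span (Or.inl ⟨u, v, rfl⟩))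
  have hcyc (u v w : J) : β (mul u v) w + β (mul v w) u + β (mul w u) v = 0 :=
    (Submodule.Quotient.mk_eq_zero _).mpr (Submodule.subset_span (Or.inr ⟨u, v, w, rfl⟩))
  rw [← Submodule.Quotient.mk_eq_zero]
  exact cyclic_antisymm_apply_innerDerivation_eq_zero mul hcomm β hanti hcyc a b c d

/-- For a (purely even) Jordan algebra `J` over a characteristic-zero
field, with `R(J) ⊆ J⊗J` spanned by `a⊗b + b⊗a` and `(a·b)⊗c + (b·c)⊗a + (c·a)⊗b`,
the element `⟨a,b⟩(c)⊗d + c⊗⟨a,b⟩(d) + ⟨c,d⟩(a)⊗b + a⊗⟨c,d⟩(b)` lies in `R(J)`,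
where `⟨a,b⟩(x) = a·(b·x) − b·(a·x)`. -/
theorem inner_action_in_relations
    {J : Type} [AddCommGroup J] [Module ℂ J]
    (mul : J →ₗ[ℂ] J →ₗ[ℂ] J)
    (hcomm : ∀ a b : J, mul a b = mul b a)
    (hjordan : ∀ a b : J, mul (mul (mul a a) b) a = mul (mul a a) (mul b a)) :
    ∀ a b c d : J,
      (mul a (mul b c) - mul b (mul a c)) ⊗ₜ[ℂ] d
        + c ⊗ₜ[ℂ] (mul a (mul b d) - mul b (mul a d))
        + (mul c (mul d a) - mul d (mul c a)) ⊗ₜ[ℂ] b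
        + a ⊗ₜ[ℂ] (mul c (mul d b) - mul d (mul c b))
      ∈ Submodule.span ℂ
          ({x : J ⊗[ℂ] J | ∃ u v : J, x = u ⊗ₜ[ℂ] v + v ⊗ₜ[ℂ] u} ∪
           {x : J ⊗[ℂ] J | ∃ u v w : J,
              x = (mul u v) ⊗ₜ[ℂ] w + (mul v w) ⊗ₜ[ℂ] u + (mul w u) ⊗ₜ[ℂ] v}) :=
  inner_action_in_relations_general mul hcomm
end
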